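/- Let n, K, d ≥ 1, γ > 0, α ≥ 0, let x_1, …, x_n ∈ ℝ^d and D_1, …, D_K ∈ ℝ^d be fixed, and set d_{ik} = ‖x_i − D_k‖^2. Let Ω = {μ ∈ ℝ^{n×K} : μ_{ik} ≥ 0, ∑_k μ_{ik} = 1 for all i}, and define F(μ) = ∑_{i,k} μ_{ik} d_{ik} + (α/2) ∑_k (q_k − 1/K)^2 + γ ∑_{i,k} μ_{ik} log μ_{ik}, where q_k = (1/n) ∑_i μ_{ik} (convention 0·log 0 = 0). If μ* ∈ Ω has all entries strictly positive and is a local minimizer of F on Ω, then for all i, k: μ*_{ik} = exp(−(1/γ)(d_{ik} + (α/n)(q*_k − 1/K))) / ∑_{k'} exp(−(1/γ)(d_{ik'} + (α/n)(q*_{k'} − 1/K))), where q*_k = (1/n) ∑_i μ*_{ik}. -/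

import Mathlib

/-!
Moving mass `t` from entry `(i, k₂)` to entry `(i, k₁)` of an interior point of `Ω` stays in `Ω`
for small `|t|`, so at a local minimizer the directional derivative `∂F/∂μ_{ik₁} - ∂F/∂μ_{ik₂}`
vanishes. Hence `γ log μ_{ik} + d_{ik} + (α/n)(q_k - 1/K)` is constant along each row;
exponentiating and normalising by the row sum `1` gives the softmax formula.
-/

open Real Filter Topology Finset

theorem IsLocalMinOn.hasDerivAt_line_eq_zero {E : Type*} [AddCommGroup E] [Module ℝ E]
    [TopologicalSpace E] [ContinuousAdd E] [ContinuousSMul ℝ E]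
    {f : E → ℝ} {s : Set E} {a v : E} {f' : ℝ}
    (hmin : IsLocalMinOn f s a) (hline : ∀ᶠ t in 𝓝 (0 : ℝ), a + t • v ∈ s)
    (hf : HasDerivAt (fun t : ℝ => f (a + t • v)) f' 0) : f' = 0 := by
  have hcont : Continuous fun t : ℝ => a + t • v := by fun_prop
  have htend : Tendsto (fun t : ℝ => a + t • v) (𝓝 0) (𝓝[s] a) :=
    tendsto_nhdsWithin_iff.2 ⟨by simpa using hcont.tendsto 0, hline⟩
  refine IsLocalMin.hasDerivAt_eq_zero ?_ hf
  exact (htend.eventually hmin).mono fun t ht => by simpa using ht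

theorem eq_exp_div_sum_exp_of_mul_log_add_eq {κ : Type*} [Fintype κ] {p c : κ → ℝ} {γ L : ℝ}
    (hγ : γ ≠ 0) (hpos : ∀ k, 0 < p k) (hsum : ∑ k, p k = 1)
    (hL : ∀ k, γ * log (p k) + c k = L) (k : κ) :
    p k = exp (-(1 / γ) * c k) / ∑ k', exp (-(1 / γ) * c k') := by
  have hp : ∀ k, p k = exp (L / γ) * exp (-(1 / γ) * c k) := by
    intro k
    conv_lhs => rw [← exp_log (hpos k)]
    rw [← exp_add, ← hL k]
    congr 1
    field_simp
    ring
  have hnorm : exp (L / γ) * ∑ k', exp (-(1 / γ) * c k') = 1 := by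
    rw [mul_sum]
    exact (sum_congr rfl fun k _ => (hp k).symm).trans hsum
  rw [eq_div_iff (right_ne_zero_of_mul_eq_one hnorm), hp k]
  linear_combination exp (-(1 / γ) * c k) * hnorm

noncomputable section Membership

variable {ι κ : Type*} [Fintype ι] [Fintype κ]

def rowStochastic : Set (ι → κ → ℝ) := {μ | (∀ i k, 0 ≤ μ i k) ∧ ∀ i, ∑ k, μ i k = 1}

theorem eventually_add_smul_mem_rowStochastic {μ v : ι → κ → ℝ}
    (hpos : ∀ i k, 0 < μ i k) (hrow : ∀ i, ∑ k, μ i k = 1) (hv : ∀ i, ∑ k, v i k = 0) :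
    ∀ᶠ t in 𝓝 (0 : ℝ), μ + t • v ∈ rowStochastic := by
  have hentry : ∀ i k, ∀ᶠ t in 𝓝 (0 : ℝ), 0 < μ i k + t * v i k := fun i k =>
    (continuous_const.add (continuous_id.mul continuous_const)).tendsto' 0 _ (by simp)
      |>.eventually (lt_mem_nhds (hpos i k))
  filter_upwards [eventually_all.2 fun i => eventually_all.2 (hentry i)] with t ht
  exact ⟨fun i k => (ht i k).le, fun i => by simp [sum_add_distrib, ← mul_sum, hrow i, hv i]⟩

/-- The objective `F` of the statement, with `s = 1/n` and `b = 1/K`. -/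
def membershipObjective (dst : ι → κ → ℝ) (α γ s b : ℝ) (μ : ι → κ → ℝ) : ℝ :=
  (∑ i, ∑ k, μ i k * dst i k)
    + (α / 2) * ∑ k, (s * ∑ i, μ i k - b) ^ 2
    + γ * ∑ i, ∑ k, μ i k * log (μ i k)

def membershipObjectiveGrad (dst : ι → κ → ℝ) (α γ s b : ℝ) (μ : ι → κ → ℝ) (i : ι) (k : κ) :
    ℝ :=
  dst i k + α * s * (s * ∑ i', μ i' k - b) + γ * (log (μ i k) + 1)

theorem hasDerivAt_membershipObjective_line (dst : ι → κ → ℝ) (α γ s b : ℝ)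
    {μ : ι → κ → ℝ} (hpos : ∀ i k, 0 < μ i k) (v : ι → κ → ℝ) :
    HasDerivAt (fun t : ℝ => membershipObjective dst α γ s b (μ + t • v))
      (∑ i, ∑ k, v i k * membershipObjectiveGrad dst α γ s b μ i k) 0 := by
  have hentry : ∀ i k, HasDerivAt (fun t : ℝ => μ i k + t * v i k) (v i k) 0 := fun i k => by
    simpa using ((hasDerivAt_id (0 : ℝ)).mul_const (v i k)).const_add (μ i k)
  have hlin := HasDerivAt.fun_sum (u := univ) fun i _ =>
    HasDerivAt.fun_sum (u := univ) fun k _ => (hentry i k).mul_const (dst i k)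
  have hcol : ∀ k, HasDerivAt (fun t : ℝ => s * ∑ i, (μ i k + t * v i k) - b)
      (s * ∑ i, v i k) 0 := fun k =>
    ((HasDerivAt.fun_sum (u := univ) fun i _ => hentry i k).const_mul s).sub_const b
  have hpen := (HasDerivAt.fun_sum (u := univ) fun k _ => (hcol k).pow 2).const_mul (α / 2)
  have hent := (HasDerivAt.fun_sum (u := univ) fun i _ => HasDerivAt.fun_sum (u := univ) fun k _ =>
    (hasDerivAt_mul_log (hpos i k).ne').comp_of_eq 0 (hentry i k) (by simp)).const_mul γ
  refine ((hlin.add hpen).add hent).congr_deriv ?_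
  simp only [membershipObjectiveGrad, zero_mul, add_zero, mul_sum]
  rw [sum_comm (f := fun k i => α / 2 * _)]
  simp only [← sum_add_distrib]
  exact sum_congr rfl fun i _ => sum_congr rfl fun k _ => by push_cast; ring

end Membership

section Transfer

variable {ι κ : Type*} [DecidableEq ι] [Fintype κ] [DecidableEq κ]

def transfer (i : ι) (k₁ k₂ : κ) : ι → κ → ℝ :=
  Pi.single i (Pi.single k₁ 1 - Pi.single k₂ 1)

theorem sum_transfer_row (i : ι) (k₁ k₂ : κ) (i' : ι) : ∑ k, transfer i k₁ k₂ i' k = 0 := by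
  rcases eq_or_ne i' i with rfl | hi
  · simp [transfer, sum_sub_distrib]
  · simp [transfer, hi]

theorem sum_transfer_mul [Fintype ι] (i : ι) (k₁ k₂ : κ) (g : ι → κ → ℝ) :
    ∑ i', ∑ k, transfer i k₁ k₂ i' k * g i' k = g i k₁ - g i k₂ := by
  rw [Fintype.sum_eq_single i fun i' hi => by simp [transfer, hi]]
  simp [transfer, sub_mul, sum_sub_distrib, Pi.single_apply]

theorem membershipObjectiveGrad_eq_of_isLocalMinOn [Fintype ι] {dst : ι → κ → ℝ} {α γ s b : ℝ}
    {μ : ι → κ → ℝ} (hpos : ∀ i k, 0 < μ i k) (hrow : ∀ i, ∑ k, μ i k = 1)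
    (hmin : IsLocalMinOn (membershipObjective dst α γ s b) rowStochastic μ) (i : ι) (k₁ k₂ : κ) :
    membershipObjectiveGrad dst α γ s b μ i k₁ = membershipObjectiveGrad dst α γ s b μ i k₂ := by
  have h := hmin.hasDerivAt_line_eq_zero
    (eventually_add_smul_mem_rowStochastic hpos hrow (sum_transfer_row i k₁ k₂))
    (hasDerivAt_membershipObjective_line dst α γ s b hpos (transfer i k₁ k₂))
  rw [sum_transfer_mul] at h
  exact sub_eq_zero.1 h

end Transfer

theorem stmt_8_general (n K d : ℕ)
    (γ α : ℝ) (hγ : 0 < γ)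
    (x : Fin n → EuclideanSpace ℝ (Fin d)) (D : Fin K → EuclideanSpace ℝ (Fin d)) :
    let dst : Fin n → Fin K → ℝ := fun i k => ‖x i - D k‖ ^ 2
    let Ω : Set (Fin n → Fin K → ℝ) := {μ | (∀ i k, 0 ≤ μ i k) ∧ ∀ i, ∑ k, μ i k = 1}
    let F : (Fin n → Fin K → ℝ) → ℝ := fun μ =>
      (∑ i, ∑ k, μ i k * dst i k)
      + (α / 2) * ∑ k, ((1 / (n : ℝ)) * ∑ i, μ i k - 1 / (K : ℝ)) ^ 2
      + γ * ∑ i, ∑ k, μ i k * Real.log (μ i k)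
    ∀ μs ∈ Ω, (∀ i k, 0 < μs i k) → IsLocalMinOn F Ω μs →
      ∀ i k, μs i k =
        Real.exp (-(1 / γ) * (dst i k
            + (α / n) * ((1 / (n : ℝ)) * (∑ i', μs i' k) - 1 / (K : ℝ)))) /
        ∑ k', Real.exp (-(1 / γ) * (dst i k'
            + (α / n) * ((1 / (n : ℝ)) * (∑ i', μs i' k') - 1 / (K : ℝ)))) := by
  intro dst Ω F μs hμs hpos hmin i k
  have hgrad := membershipObjectiveGrad_eq_of_isLocalMinOn hpos hμs.2 hmin i
  refine eq_exp_div_sum_exp_of_mul_log_add_eq hγ.ne' (hpos i) (hμs.2 i)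
    (c := fun m => dst i m + (α / n) * ((1 / (n : ℝ)) * (∑ i', μs i' m) - 1 / (K : ℝ)))
    (L := membershipObjectiveGrad dst α γ (1 / n) (1 / K) μs i k - γ) (fun m => ?_) k
  rw [← hgrad m k, membershipObjectiveGrad]
  ring

/-- First-order optimality for the surrogate-model membership objective: an interior
local minimizer over the row-stochastic matrices satisfies the softmax fixed-point
formula of Proposition 1 (Eq. (2)). -/
theorem stmt_8 (n K d : ℕ) (hn : 1 ≤ n) (hK : 1 ≤ K) (hd : 1 ≤ d)
    (γ α : ℝ) (hγ : 0 < γ) (hα : 0 ≤ α)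
    (x : Fin n → EuclideanSpace ℝ (Fin d)) (D : Fin K → EuclideanSpace ℝ (Fin d)) :
    let dst : Fin n → Fin K → ℝ := fun i k => ‖x i - D k‖ ^ 2
    let Ω : Set (Fin n → Fin K → ℝ) := {μ | (∀ i k, 0 ≤ μ i k) ∧ ∀ i, ∑ k, μ i k = 1}
    let F : (Fin n → Fin K → ℝ) → ℝ := fun μ =>
      (∑ i, ∑ k, μ i k * dst i k)
      + (α / 2) * ∑ k, ((1 / (n : ℝ)) * ∑ i, μ i k - 1 / (K : ℝ)) ^ 2
      + γ * ∑ i, ∑ k, μ i k * Real.log (μ i k)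
    ∀ μs ∈ Ω, (∀ i k, 0 < μs i k) → IsLocalMinOn F Ω μs →
      ∀ i k, μs i k =
        Real.exp (-(1 / γ) * (dst i k
            + (α / n) * ((1 / (n : ℝ)) * (∑ i', μs i' k) - 1 / (K : ℝ)))) /
        ∑ k', Real.exp (-(1 / γ) * (dst i k'
            + (α / n) * ((1 / (n : ℝ)) * (∑ i', μs i' k') - 1 / (K : ℝ)))) :=
  stmt_8_general n K d γ α hγ x D
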